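/- Let P and Q_B be probability distributions with full support on a finite alphabet, and let Q* be the geometric mixture Q*(x) = P(x)^α Q_B(x)^{1−α}/Z with Z = ∑_{x'} P(x')^α Q_B(x')^{1−α} for some α > 0, α ≠ 1. Then D(P‖Q*) = (1−α)(D(P‖Q_B) − D_α(P‖Q_B)), where D_α is the Rényi divergence of order α. -/
import Mathlib


open Finset Real

noncomputable def klDiv {X : Type} [Fintype X] (p q : X → ℝ) : ℝ :=
  ∑ x, p x * Real.logb 2 (p x / q x)

noncomputable def renyiDiv {X : Type} [Fintype X] (α : ℝ) (p q : X → ℝ) : ℝ :=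
  (1 / (α - 1)) * Real.logb 2 (∑ x, p x ^ α * q x ^ (1 - α))

theorem klDiv_to_geometric_mixture
    {X : Type} [Fintype X] [Nonempty X]
    (P QB : X → ℝ)
    (hPpos : ∀ x, 0 < P x) (hQpos : ∀ x, 0 < QB x)
    (hP1 : ∑ x, P x = 1) (hQ1 : ∑ x, QB x = 1)
    (α : ℝ) (hα0 : 0 < α) (hα1 : α ≠ 1) :
    letI Z : ℝ := ∑ x', P x' ^ α * QB x' ^ (1 - α)
    letI Qstar : X → ℝ := fun x => P x ^ α * QB x ^ (1 - α) / Z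
    klDiv P Qstar = (1 - α) * (klDiv P QB - renyiDiv α P QB) := by
  set Z : ℝ := ∑ x', P x' ^ α * QB x' ^ (1 - α) with hZ
  set Qstar : X → ℝ := fun x => P x ^ α * QB x ^ (1 - α) / Z with hQs
  have hZpos : 0 < Z := Finset.sum_pos (fun x _ =>
    mul_pos (Real.rpow_pos_of_pos (hPpos x) _) (Real.rpow_pos_of_pos (hQpos x) _))
    Finset.univ_nonempty
  have key : ∀ x, P x / Qstar x = Z * (P x / QB x) ^ (1 - α) := by
    intro x
    have hp := hPpos x
    have hq := hQpos x
    have hdiv : (P x / QB x) ^ (1 - α) = P x ^ (1 - α) / QB x ^ (1 - α) :=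
      Real.div_rpow hp.le hq.le _
    have hPsplit : P x ^ α * P x ^ (1 - α) = P x := by
      rw [← Real.rpow_add hp]; simp
    rw [hQs]
    show P x / (P x ^ α * QB x ^ (1 - α) / Z) = _
    rw [hdiv]
    have h1 : P x ^ α ≠ 0 := (Real.rpow_pos_of_pos hp _).ne'
    have h2 : QB x ^ (1 - α) ≠ 0 := (Real.rpow_pos_of_pos hq _).ne'
    rw [div_div_eq_mul_div, ← mul_div_assoc, div_eq_div_iff
      (mul_pos (Real.rpow_pos_of_pos hp _) (Real.rpow_pos_of_pos hq _)).ne'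
      (Real.rpow_pos_of_pos hq _).ne']
    calc P x * Z * QB x ^ (1 - α)
        = (P x ^ α * P x ^ (1 - α)) * Z * QB x ^ (1 - α) := by rw [hPsplit]
      _ = Z * P x ^ (1 - α) * (P x ^ α * QB x ^ (1 - α)) := by ring
  have hlog : ∀ x, Real.logb 2 (P x / Qstar x)
      = Real.logb 2 Z + (1 - α) * Real.logb 2 (P x / QB x) := by
    intro x
    rw [key x, Real.logb_mul hZpos.ne' (Real.rpow_pos_of_pos (div_pos (hPpos x) (hQpos x)) _).ne',
      Real.logb_rpow_eq_mul_logb_of_pos (div_pos (hPpos x) (hQpos x))]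
  unfold klDiv renyiDiv
  have : ∑ x, P x * Real.logb 2 (P x / Qstar x)
      = Real.logb 2 Z + (1 - α) * ∑ x, P x * Real.logb 2 (P x / QB x) := by
    calc ∑ x, P x * Real.logb 2 (P x / Qstar x)
        = ∑ x, (P x * Real.logb 2 Z + (1 - α) * (P x * Real.logb 2 (P x / QB x))) := by
          apply Finset.sum_congr rfl
          intro x _
          rw [hlog x]; ring
      _ = (∑ x, P x) * Real.logb 2 Z + (1 - α) * ∑ x, P x * Real.logb 2 (P x / QB x) := by
          rw [Finset.sum_add_distrib, ← Finset.sum_mul, ← Finset.mul_sum]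
      _ = _ := by rw [hP1, one_mul]
  rw [this]
  have h1 : α - 1 ≠ 0 := sub_ne_zero.mpr hα1
  field_simp
  ring
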